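/- arXiv:2305.03008 — 4 statements merged into one kernel-verified Lean document; each statement's English description precedes it below -/
import Mathlib

section
/- For every natural number n ≥ 1 and every real number μ with 0 ≤ μ < 1, one has 1 - (1-μ)·exp(μ + μ²/2 + ... + μⁿ/n) ≤ exp(μ^{n+1}/(1-μ)) - 1. -/
open Finset

theorem exp_partial_sum_inequality (n : ℕ) (hn : 1 ≤ n) (μ : ℝ) (h0 : 0 ≤ μ) (h1 : μ < 1) :
    1 - (1 - μ) * Real.exp (∑ k ∈ Finset.range n, μ ^ (k + 1) / (k + 1)) ≤
      Real.exp (μ ^ (n + 1) / (1 - μ)) - 1 := by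
  have hμ1 : (0:ℝ) < 1 - μ := by linarith
  set t : ℝ := μ ^ (n + 1) / (1 - μ) with ht
  have ht0 : 0 ≤ t := div_nonneg (pow_nonneg h0 _) hμ1.le
  have habs : |μ| < 1 := by rwa [abs_of_nonneg h0]
  have key := Real.abs_log_sub_add_sum_range_le habs n
  rw [abs_of_nonneg h0] at key
  have hS : -Real.log (1 - μ) - t ≤ ∑ k ∈ Finset.range n, μ ^ (k + 1) / (k + 1) := by
    have := neg_le_of_abs_le key
    linarith
  have hexp : Real.exp (-Real.log (1 - μ) - t) ≤
      Real.exp (∑ k ∈ Finset.range n, μ ^ (k + 1) / (k + 1)) := Real.exp_le_exp.2 hS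
  have hval : Real.exp (-Real.log (1 - μ) - t) = Real.exp (-t) / (1 - μ) := by
    rw [sub_eq_add_neg, Real.exp_add, Real.exp_neg (Real.log (1 - μ)), Real.exp_log hμ1]
    ring
  have hlow : Real.exp (-t) ≤ (1 - μ) * Real.exp (∑ k ∈ Finset.range n, μ ^ (k + 1) / (k + 1)) := by
    rw [hval] at hexp
    calc Real.exp (-t) = (1 - μ) * (Real.exp (-t) / (1 - μ)) := by field_simp
    _ ≤ _ := by exact mul_le_mul_of_nonneg_left hexp hμ1.le
  have h2 : -t + 1 ≤ Real.exp (-t) := Real.add_one_le_exp _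
  have h3 : t + 1 ≤ Real.exp t := Real.add_one_le_exp _
  linarith
end

section
/- Let X be a complex Hilbert space and let E₊, E₋ be bounded linear operators on X that are Fredholm of index 0 and satisfy E₊E₊* = E₋E₋*. Then E₊ is invertible (as a bounded operator with bounded inverse) if and only if E₋ is invertible. -/
/-! If `E₊` is invertible then so is `E₊E₊* = E₋E₋*`, hence `E₋` is surjective and `E₋*` is
injective. Index zero turns `ker E₋* = 0` into `ker E₋ = 0`, so `E₋` is bijective, and bijective
bounded operators on a Banach space are invertible by the open mapping theorem. -/

open ContinuousLinearMap

namespace ContinuousLinearMap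

variable {𝕜 E : Type*} [RCLike 𝕜] [NormedAddCommGroup E] [InnerProductSpace 𝕜 E] [CompleteSpace E]

theorem _root_.IsUnit.comp_adjoint {T : E →L[𝕜] E} (hT : IsUnit T) : IsUnit (T ∘L adjoint T) := by
  rw [← star_eq_adjoint]
  exact hT.mul hT.star

theorem isUnit_of_isUnit_comp_adjoint (T : E →L[𝕜] E)
    [FiniteDimensional 𝕜 (LinearMap.ker (T : E →ₗ[𝕜] E))]
    (hindex : Module.finrank 𝕜 (LinearMap.ker (T : E →ₗ[𝕜] E)) =
      Module.finrank 𝕜 (LinearMap.ker (adjoint T : E →ₗ[𝕜] E)))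
    (hT : IsUnit (T ∘L adjoint T)) : IsUnit T := by
  obtain ⟨hinj, hsurj⟩ := isUnit_iff_bijective.mp hT
  have hker_adjoint : LinearMap.ker (adjoint T : E →ₗ[𝕜] E) = ⊥ :=
    LinearMap.ker_eq_bot.mpr (Function.Injective.of_comp (f := T) hinj)
  have hker : LinearMap.ker (T : E →ₗ[𝕜] E) = ⊥ := by
    rw [← Submodule.finrank_eq_zero, hindex, hker_adjoint, finrank_bot]
  exact isUnit_iff_bijective.mpr
    ⟨LinearMap.ker_eq_bot.mp hker, Function.Surjective.of_comp hsurj⟩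

end ContinuousLinearMap

theorem isUnit_iff_of_index_zero_of_mul_adjoint_eq_general
    {X : Type*} [NormedAddCommGroup X] [InnerProductSpace ℂ X] [CompleteSpace X]
    (Ep Em : X →L[ℂ] X)
    (hpk : FiniteDimensional ℂ (LinearMap.ker (Ep : X →ₗ[ℂ] X)))
    (hmk : FiniteDimensional ℂ (LinearMap.ker (Em : X →ₗ[ℂ] X)))
    (hp0 : Module.finrank ℂ (LinearMap.ker (Ep : X →ₗ[ℂ] X)) =
      Module.finrank ℂ (LinearMap.ker (ContinuousLinearMap.adjoint Ep : X →ₗ[ℂ] X)))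
    (hm0 : Module.finrank ℂ (LinearMap.ker (Em : X →ₗ[ℂ] X)) =
      Module.finrank ℂ (LinearMap.ker (ContinuousLinearMap.adjoint Em : X →ₗ[ℂ] X)))
    (h : Ep ∘L ContinuousLinearMap.adjoint Ep = Em ∘L ContinuousLinearMap.adjoint Em) :
    IsUnit Ep ↔ IsUnit Em :=
  ⟨fun hEp => isUnit_of_isUnit_comp_adjoint Em hm0 (h ▸ hEp.comp_adjoint),
    fun hEm => isUnit_of_isUnit_comp_adjoint Ep hp0 (h ▸ hEm.comp_adjoint)⟩

theorem isUnit_iff_of_index_zero_of_mul_adjoint_eq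
    {X : Type*} [NormedAddCommGroup X] [InnerProductSpace ℂ X] [CompleteSpace X]
    (Ep Em : X →L[ℂ] X)
    (hpk : FiniteDimensional ℂ (LinearMap.ker (Ep : X →ₗ[ℂ] X)))
    (hpk' : FiniteDimensional ℂ (LinearMap.ker (ContinuousLinearMap.adjoint Ep : X →ₗ[ℂ] X)))
    (hmk : FiniteDimensional ℂ (LinearMap.ker (Em : X →ₗ[ℂ] X)))
    (hmk' : FiniteDimensional ℂ (LinearMap.ker (ContinuousLinearMap.adjoint Em : X →ₗ[ℂ] X)))
    (hp0 : Module.finrank ℂ (LinearMap.ker (Ep : X →ₗ[ℂ] X)) =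
      Module.finrank ℂ (LinearMap.ker (ContinuousLinearMap.adjoint Ep : X →ₗ[ℂ] X)))
    (hm0 : Module.finrank ℂ (LinearMap.ker (Em : X →ₗ[ℂ] X)) =
      Module.finrank ℂ (LinearMap.ker (ContinuousLinearMap.adjoint Em : X →ₗ[ℂ] X)))
    (h : Ep ∘L ContinuousLinearMap.adjoint Ep = Em ∘L ContinuousLinearMap.adjoint Em) :
    IsUnit Ep ↔ IsUnit Em :=
  isUnit_iff_of_index_zero_of_mul_adjoint_eq_general Ep Em hpk hmk hp0 hm0 h
end

section
/- Let X be a Hilbert space and let E₊, E₋ : ℂ → B(X) be operator-valued functions satisfying: for all x ∈ ℝ, E₊(x)E₊(x)* = E₋(x)E₋(x)*, each value E₊(z), E₋(z) is a Fredholm operator of index 0, E₊ is invertible on ℂ₊ and E₋ is invertible on ℂ₋. Then for every x ∈ ℝ, E₊(x) is invertible if and only if E₋(x) is invertible. -/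
/-!
If `A A* = B B*` and `A` is invertible, then `B B*` is invertible. Hence `B` is onto and `B*` is
one-to-one (the pointwise form of Douglas's range inclusion). Index `0` and `ker B* = 0` force the
finite-dimensional kernel of `B` to vanish, so `B` is bijective and, by the open mapping theorem,
invertible. The roles of `A` and `B` are symmetric.
-/

open ContinuousLinearMap

section

variable {𝕜 E : Type*} [NontriviallyNormedField 𝕜] [NormedAddCommGroup E] [NormedSpace 𝕜 E]
  [CompleteSpace E]

theorem ContinuousLinearMap.surjective_of_isUnit_comp {f g : E →L[𝕜] E} (h : IsUnit (f ∘L g)) :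
    Function.Surjective f :=
  Function.Surjective.of_comp (g := g) (isUnit_iff_bijective.mp h).2

theorem ContinuousLinearMap.injective_of_isUnit_comp {f g : E →L[𝕜] E} (h : IsUnit (f ∘L g)) :
    Function.Injective g :=
  Function.Injective.of_comp (f := f) (isUnit_iff_bijective.mp h).1

end

section

variable {𝕜 E : Type*} [RCLike 𝕜] [NormedAddCommGroup E] [InnerProductSpace 𝕜 E] [CompleteSpace E]

theorem IsUnit.comp_adjoint_s12 {A : E →L[𝕜] E} (hA : IsUnit A) : IsUnit (A ∘L adjoint A) := by
  simpa only [star_eq_adjoint, mul_def] using hA.mul hA.star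

theorem ContinuousLinearMap.injective_of_injective_adjoint {B : E →L[𝕜] E}
    [FiniteDimensional 𝕜 (LinearMap.ker (B : E →ₗ[𝕜] E))]
    (hindex : Module.finrank 𝕜 (LinearMap.ker (B : E →ₗ[𝕜] E)) =
      Module.finrank 𝕜 (LinearMap.ker (adjoint B : E →ₗ[𝕜] E)))
    (hB : Function.Injective (adjoint B)) : Function.Injective B := by
  have hker : LinearMap.ker (adjoint B : E →ₗ[𝕜] E) = ⊥ := LinearMap.ker_eq_bot.mpr hB
  rw [hker, finrank_bot] at hindex
  exact LinearMap.ker_eq_bot.mp (Submodule.finrank_eq_zero.mp hindex)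

theorem ContinuousLinearMap.isUnit_of_isUnit_comp_adjoint_s12 {B : E →L[𝕜] E}
    [FiniteDimensional 𝕜 (LinearMap.ker (B : E →ₗ[𝕜] E))]
    (hindex : Module.finrank 𝕜 (LinearMap.ker (B : E →ₗ[𝕜] E)) =
      Module.finrank 𝕜 (LinearMap.ker (adjoint B : E →ₗ[𝕜] E)))
    (h : IsUnit (B ∘L adjoint B)) : IsUnit B :=
  isUnit_iff_bijective.mpr
    ⟨injective_of_injective_adjoint hindex (injective_of_isUnit_comp h),
      surjective_of_isUnit_comp h⟩

end

theorem isUnit_Ep_iff_isUnit_Em_on_real_general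
    {X : Type*} [NormedAddCommGroup X] [InnerProductSpace ℂ X] [CompleteSpace X]
    (Ep Em : ℂ → (X →L[ℂ] X))
    -- `E₊(x)E₊(x)* = E₋(x)E₋(x)*` for all real `x`
    (hEq : ∀ x : ℝ, Ep (x : ℂ) ∘L ContinuousLinearMap.adjoint (Ep (x : ℂ)) =
      Em (x : ℂ) ∘L ContinuousLinearMap.adjoint (Em (x : ℂ)))
    -- each value is a Fredholm operator of index `0`
    (hFp : ∀ z : ℂ, FiniteDimensional ℂ (LinearMap.ker (Ep z : X →ₗ[ℂ] X)) ∧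
      FiniteDimensional ℂ (LinearMap.ker (ContinuousLinearMap.adjoint (Ep z) : X →ₗ[ℂ] X)))
    (hFm : ∀ z : ℂ, FiniteDimensional ℂ (LinearMap.ker (Em z : X →ₗ[ℂ] X)) ∧
      FiniteDimensional ℂ (LinearMap.ker (ContinuousLinearMap.adjoint (Em z) : X →ₗ[ℂ] X)))
    (hip : ∀ z : ℂ, Module.finrank ℂ (LinearMap.ker (Ep z : X →ₗ[ℂ] X)) =
      Module.finrank ℂ (LinearMap.ker (ContinuousLinearMap.adjoint (Ep z) : X →ₗ[ℂ] X)))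
    (him : ∀ z : ℂ, Module.finrank ℂ (LinearMap.ker (Em z : X →ₗ[ℂ] X)) =
      Module.finrank ℂ (LinearMap.ker (ContinuousLinearMap.adjoint (Em z) : X →ₗ[ℂ] X))) :
    ∀ x : ℝ, IsUnit (Ep (x : ℂ)) ↔ IsUnit (Em (x : ℂ)) := by
  intro x
  have := (hFp x).1
  have := (hFm x).1
  exact ⟨fun h ↦ isUnit_of_isUnit_comp_adjoint_s12 (him x) (hEq x ▸ h.comp_adjoint_s12),
    fun h ↦ isUnit_of_isUnit_comp_adjoint_s12 (hip x) ((hEq x).symm ▸ h.comp_adjoint_s12)⟩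

theorem isUnit_Ep_iff_isUnit_Em_on_real
    {X : Type*} [NormedAddCommGroup X] [InnerProductSpace ℂ X] [CompleteSpace X]
    (Ep Em : ℂ → (X →L[ℂ] X))
    -- `E₊(x)E₊(x)* = E₋(x)E₋(x)*` for all real `x`
    (hEq : ∀ x : ℝ, Ep (x : ℂ) ∘L ContinuousLinearMap.adjoint (Ep (x : ℂ)) =
      Em (x : ℂ) ∘L ContinuousLinearMap.adjoint (Em (x : ℂ)))
    -- each value is a Fredholm operator of index `0`
    (hFp : ∀ z : ℂ, FiniteDimensional ℂ (LinearMap.ker (Ep z : X →ₗ[ℂ] X)) ∧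
      FiniteDimensional ℂ (LinearMap.ker (ContinuousLinearMap.adjoint (Ep z) : X →ₗ[ℂ] X)))
    (hFm : ∀ z : ℂ, FiniteDimensional ℂ (LinearMap.ker (Em z : X →ₗ[ℂ] X)) ∧
      FiniteDimensional ℂ (LinearMap.ker (ContinuousLinearMap.adjoint (Em z) : X →ₗ[ℂ] X)))
    (hip : ∀ z : ℂ, Module.finrank ℂ (LinearMap.ker (Ep z : X →ₗ[ℂ] X)) =
      Module.finrank ℂ (LinearMap.ker (ContinuousLinearMap.adjoint (Ep z) : X →ₗ[ℂ] X)))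
    (him : ∀ z : ℂ, Module.finrank ℂ (LinearMap.ker (Em z : X →ₗ[ℂ] X)) =
      Module.finrank ℂ (LinearMap.ker (ContinuousLinearMap.adjoint (Em z) : X →ₗ[ℂ] X)))
    -- `E₊` is invertible on the open upper half-plane, `E₋` on the open lower half-plane
    (hEp_inv : ∀ z : ℂ, 0 < z.im → IsUnit (Ep z))
    (hEm_inv : ∀ z : ℂ, z.im < 0 → IsUnit (Em z)) :
    ∀ x : ℝ, IsUnit (Ep (x : ℂ)) ↔ IsUnit (Em (x : ℂ)) :=
  isUnit_Ep_iff_isUnit_Em_on_real_general Ep Em hEq hFp hFm hip him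
end

section
/- Let X be a Hilbert space and E₊, E₋, F₊, F₋ : ℂ → B(X) operator-valued entire functions such that (E₋, E₊) and (F₋, F₊) are de Branges operators (E₊, F₊ invertible on ℂ₊; E₋, F₋ invertible on ℂ₋; E₊⁻¹E₋ and F₊⁻¹F₋ lie in the operator Schur class of ℂ₊ with unitary boundary values). Assume F₊(z) commutes with E₊(z) and E₋(z), and F₋(z) commutes with E₊(z) and E₋(z), for all z. Then (E₋F₋, E₊F₊) is again a de Branges operator; in particular (E₊F₊)⁻¹(E₋F₋) is a Schur-class function on ℂ₊ with unitary (isometric and co-isometric) boundary values. -/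
open ContinuousLinearMap

variable {X : Type*} [NormedAddCommGroup X] [InnerProductSpace ℂ X] [CompleteSpace X]

/-- A de Branges operator: a pair `(E₋, E₊)` of entire Fredholm-operator-valued functions
with `E₊` invertible on `ℂ₊`, `E₋` invertible on `ℂ₋`, `E₊⁻¹E₋` contractive (Schur class)
on `ℂ₊`, and with unitary (isometric and co-isometric) boundary values on `ℝ`. -/
def IsDeBrangesOperator (Em Ep : ℂ → (X →L[ℂ] X)) : Prop :=
  Differentiable ℂ Ep ∧ Differentiable ℂ Em ∧
    (∀ z : ℂ, FiniteDimensional ℂ (LinearMap.ker ((Ep z : X →L[ℂ] X) : X →ₗ[ℂ] X)) ∧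
      FiniteDimensional ℂ (LinearMap.ker ((ContinuousLinearMap.adjoint (Ep z) : X →L[ℂ] X) : X →ₗ[ℂ] X))) ∧
    (∀ z : ℂ, FiniteDimensional ℂ (LinearMap.ker ((Em z : X →L[ℂ] X) : X →ₗ[ℂ] X)) ∧
      FiniteDimensional ℂ (LinearMap.ker ((ContinuousLinearMap.adjoint (Em z) : X →L[ℂ] X) : X →ₗ[ℂ] X))) ∧
    (∀ z : ℂ, 0 < z.im → IsUnit (Ep z)) ∧
    (∀ z : ℂ, z.im < 0 → IsUnit (Em z)) ∧
    (∀ z : ℂ, 0 < z.im → ‖Ring.inverse (Ep z) ∘L Em z‖ ≤ 1) ∧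
    (∀ x : ℝ, IsUnit (Ep (x : ℂ)) →
      (Ring.inverse (Ep (x : ℂ)) ∘L Em (x : ℂ)) ∘L
          ContinuousLinearMap.adjoint (Ring.inverse (Ep (x : ℂ)) ∘L Em (x : ℂ)) = 1 ∧
        ContinuousLinearMap.adjoint (Ring.inverse (Ep (x : ℂ)) ∘L Em (x : ℂ)) ∘L
          (Ring.inverse (Ep (x : ℂ)) ∘L Em (x : ℂ)) = 1)

/-! Since `F₊` commutes with `E₊` and `E₋`, the transfer function of the product factors as
`(E₊F₊)⁻¹(E₋F₋) = (E₊⁻¹E₋)(F₊⁻¹F₋)`. A product of contractions is a contraction and a product of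
unitaries is unitary, so the Schur-class and boundary conditions pass to the product. The
Fredholm conditions are stable under composition: `ker (fg)` is an extension of a subspace of
`ker f` by `ker g`, and `(fg)* = g*f*`. -/

theorem LinearMap.finite_ker_comp {R M N P : Type*} [Ring R] [IsNoetherianRing R]
    [AddCommGroup M] [Module R M] [AddCommGroup N] [Module R N] [AddCommGroup P] [Module R P]
    (f : N →ₗ[R] P) (g : M →ₗ[R] N) (hf : Module.Finite R (LinearMap.ker f))
    (hg : Module.Finite R (LinearMap.ker g)) : Module.Finite R (LinearMap.ker (f ∘ₗ g)) := by
  have hmap : ((LinearMap.ker (f ∘ₗ g)).map g).FG :=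
    (Module.Finite.iff_fg.mp hf).of_le <|
      Submodule.map_le_iff_le_comap.mpr (LinearMap.ker_comp g f).le
  have hker : (LinearMap.ker (f ∘ₗ g) ⊓ LinearMap.ker g).FG :=
    (Module.Finite.iff_fg.mp hg).of_le inf_le_right
  exact Module.Finite.iff_fg.mpr (Submodule.fg_of_fg_map_of_fg_inf_ker g hmap hker)

open Ring in
theorem Ring.inverse_mul_mul_mul {M₀ : Type*} [MonoidWithZero M₀] {a b c d : M₀}
    (hb : IsUnit b) (hab : Commute a b) (hbc : Commute b c) :
    (a * b)⁻¹ʳ * (c * d) = a⁻¹ʳ * c * (b⁻¹ʳ * d) := by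
  have hbc' : Commute b⁻¹ʳ c := by
    obtain ⟨u, rfl⟩ := hb
    simpa only [Ring.inverse_unit] using hbc.units_inv_left
  rw [Ring.inverse_mul (.inr hb), hab.symm.ringInverse_ringInverse.eq, mul_assoc, ← mul_assoc b⁻¹ʳ,
    hbc'.eq, mul_assoc, ← mul_assoc]

namespace ContinuousLinearMap

variable {𝕜 E F G : Type*} [RCLike 𝕜] [NormedAddCommGroup E] [InnerProductSpace 𝕜 E]
  [CompleteSpace E] [NormedAddCommGroup F] [InnerProductSpace 𝕜 F] [CompleteSpace F]
  [NormedAddCommGroup G] [InnerProductSpace 𝕜 G] [CompleteSpace G]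

theorem finiteDimensional_ker_and_ker_adjoint_comp {A : F →L[𝕜] G} {B : E →L[𝕜] F}
    (hA : FiniteDimensional 𝕜 (LinearMap.ker (A : F →ₗ[𝕜] G)) ∧
      FiniteDimensional 𝕜 (LinearMap.ker ((adjoint A : G →L[𝕜] F) : G →ₗ[𝕜] F)))
    (hB : FiniteDimensional 𝕜 (LinearMap.ker (B : E →ₗ[𝕜] F)) ∧
      FiniteDimensional 𝕜 (LinearMap.ker ((adjoint B : F →L[𝕜] E) : F →ₗ[𝕜] E))) :
    FiniteDimensional 𝕜 (LinearMap.ker ((A ∘L B : E →L[𝕜] G) : E →ₗ[𝕜] G)) ∧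
      FiniteDimensional 𝕜 (LinearMap.ker ((adjoint (A ∘L B) : G →L[𝕜] E) : G →ₗ[𝕜] E)) := by
  rw [adjoint_comp]
  exact ⟨LinearMap.finite_ker_comp _ _ hA.1 hB.1, LinearMap.finite_ker_comp _ _ hB.2 hA.2⟩

theorem mem_unitary_iff_comp_adjoint {U : E →L[𝕜] E} :
    U ∈ unitary (E →L[𝕜] E) ↔ U ∘L adjoint U = 1 ∧ adjoint U ∘L U = 1 := by
  rw [Unitary.mem_iff, and_comm, star_eq_adjoint]
  rfl

end ContinuousLinearMap

theorem isDeBrangesOperator_mul_general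
    (Em Ep Fm Fp : ℂ → (X →L[ℂ] X))
    (hE : IsDeBrangesOperator Em Ep) (hF : IsDeBrangesOperator Fm Fp)
    (hc1 : ∀ z : ℂ, Fp z ∘L Ep z = Ep z ∘L Fp z)
    (hc2 : ∀ z : ℂ, Fp z ∘L Em z = Em z ∘L Fp z) :
    IsDeBrangesOperator (fun z => Em z ∘L Fm z) (fun z => Ep z ∘L Fp z) := by
  obtain ⟨hEp, hEm, hEpK, hEmK, hEpU, hEmU, hEs, hEb⟩ := hE
  obtain ⟨hFp, hFm, hFpK, hFmK, hFpU, hFmU, hFs, hFb⟩ := hF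
  have transfer_mul : ∀ z, IsUnit (Fp z) → Ring.inverse (Ep z ∘L Fp z) ∘L (Em z ∘L Fm z) =
      (Ring.inverse (Ep z) ∘L Em z) ∘L (Ring.inverse (Fp z) ∘L Fm z) :=
    fun z hFz => Ring.inverse_mul_mul_mul hFz (hc1 z).symm (hc2 z)
  refine ⟨hEp.mul hFp, hEm.mul hFm,
    fun z => finiteDimensional_ker_and_ker_adjoint_comp (hEpK z) (hFpK z),
    fun z => finiteDimensional_ker_and_ker_adjoint_comp (hEmK z) (hFmK z),
    fun z hz => (hEpU z hz).mul (hFpU z hz), fun z hz => (hEmU z hz).mul (hFmU z hz),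
    fun z hz => ?_, fun x hx => ?_⟩
  · rw [transfer_mul z (hFpU z hz)]
    exact (opNorm_comp_le _ _).trans (mul_le_one₀ (hEs z hz) (norm_nonneg _) (hFs z hz))
  · obtain ⟨hEx, hFx⟩ := (Commute.isUnit_mul_iff (hc1 x).symm).mp hx
    rw [transfer_mul x hFx, ← mem_unitary_iff_comp_adjoint]
    exact mul_mem (mem_unitary_iff_comp_adjoint.mpr (hEb x hEx))
      (mem_unitary_iff_comp_adjoint.mpr (hFb x hFx))

theorem isDeBrangesOperator_mul
    (Em Ep Fm Fp : ℂ → (X →L[ℂ] X))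
    (hE : IsDeBrangesOperator Em Ep) (hF : IsDeBrangesOperator Fm Fp)
    (hc1 : ∀ z : ℂ, Fp z ∘L Ep z = Ep z ∘L Fp z)
    (hc2 : ∀ z : ℂ, Fp z ∘L Em z = Em z ∘L Fp z)
    (hc3 : ∀ z : ℂ, Fm z ∘L Ep z = Ep z ∘L Fm z)
    (hc4 : ∀ z : ℂ, Fm z ∘L Em z = Em z ∘L Fm z) :
    IsDeBrangesOperator (fun z => Em z ∘L Fm z) (fun z => Ep z ∘L Fp z) :=
  isDeBrangesOperator_mul_general Em Ep Fm Fp hE hF hc1 hc2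
end
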